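/- In an image-finite LTS with reflexive silent steps, if p is directed branching apart from q then there exists a PHMLU formula φ with p ⊨ φ and q ⊭ φ. -/

import Mathlib

variable {X A : Type*}

/-- Formulas of Hennessy-Milner Logic with Until. `none` is the silent action τ. -/
inductive HMLU (A : Type*) where
  | top : HMLU A
  | neg : HMLU A → HMLU A
  | and : HMLU A → HMLU A → HMLU A
  | dia : HMLU A → Option A → HMLU A → HMLU A

/-- Satisfaction: `p ⊨ δ⟨α⟩ψ` iff there is a τ-path from `p` along which every state
satisfies `δ`, ending in a state that `α`-steps to a state satisfying `ψ`. -/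
def Sat (step : Option A → X → X → Prop) : HMLU A → X → Prop
  | .top, _ => True
  | .neg φ, p => ¬ Sat step φ p
  | .and φ ψ, p => Sat step φ p ∧ Sat step ψ p
  | .dia δ α ψ, p => ∃ p' p'', Sat step δ p ∧
      Relation.ReflTransGen (fun x y => step none x y ∧ Sat step δ y) p p' ∧
      step α p' p'' ∧ Sat step ψ p''

mutual
  /-- Positive HMLU formulas. -/
  inductive Positive : HMLU A → Prop
    | top : Positive .top
    | neg {φ : HMLU A} : Negative φ → Positive (.neg φ)
    | and {φ ψ : HMLU A} : Positive φ → Positive ψ → Positive (.and φ ψ)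
    | dia {δ ψ : HMLU A} {α : Option A} : Positive δ → Positive (.dia δ α ψ)
  /-- Negative HMLU formulas. -/
  inductive Negative : HMLU A → Prop
    | top : Negative .top
    | neg {φ : HMLU A} : Positive φ → Negative (.neg φ)
    | and {φ ψ : HMLU A} : Negative φ → Negative ψ → Negative (.and φ ψ)
end

/-- Good formulas: every diamond subformula has a positive left-hand side. -/
inductive Good : HMLU A → Prop
  | top : Good .top
  | neg {φ : HMLU A} : Good φ → Good (.neg φ)
  | and {φ ψ : HMLU A} : Good φ → Good ψ → Good (.and φ ψ)
  | dia {δ ψ : HMLU A} {α : Option A} : Positive δ → Good δ → Good ψ → Good (.dia δ α ψ)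

/-- Formulas of Positive Hennessy-Milner Logic with Until. -/
inductive PHMLU (A : Type*) where
  | top : PHMLU A
  | bot : PHMLU A
  | and : PHMLU A → PHMLU A → PHMLU A
  | or : PHMLU A → PHMLU A → PHMLU A
  | dia : PHMLU A → Option A → PHMLU A → PHMLU A → PHMLU A

/-- The embedding of PHMLU into HMLU (`⊥ := ¬⊤`, `∨` by De Morgan,
`δ⟨α⟩(ψ⁺ ∧ ¬ψ⁻)` as a diamond with a conjunction on the right). -/
def PHMLU.toHMLU : PHMLU A → HMLU A
  | .top => .top
  | .bot => .neg .top
  | .and φ ψ => .and φ.toHMLU ψ.toHMLU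
  | .or φ ψ => .neg (.and (.neg φ.toHMLU) (.neg ψ.toHMLU))
  | .dia δ α ψp ψn => .dia δ.toHMLU α (.and ψp.toHMLU (.neg ψn.toHMLU))

/-- `Q` is a directed branching apartness relation. -/
def IsDBApartRel (step : Option A → X → X → Prop) (Q : X → X → Prop) : Prop :=
  ∀ (α : Option A) (p p' q : X), step α p p' →
    (∀ q' q'', Relation.ReflTransGen (step none) q q' → step α q' q'' →
      Q p q' ∨ Q p' q'' ∨ Q q'' p') → Q p q

/-- Directed branching apartness: the least directed branching apartness relation. -/
def DBApart (step : Option A → X → X → Prop) (p q : X) : Prop :=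
  ∀ Q : X → X → Prop, IsDBApartRel step Q → Q p q

/-! The relation "some PHMLU formula holds at `p` and fails at `q`" is itself a directed
branching apartness relation, so it contains the least one. For the closure step, image-finiteness
leaves finitely many steps `q ↠τ q' →α q''` to refute, and each is refuted by a distinguishing
formula for one of `(p, q')`, `(p', q'')`, `(q'', p')`: the finite conjunctions of the first two
kinds and the finite disjunction of the third kind combine into `δ⟨α⟩(ψ⁺ ∧ ¬ψ⁻)`, which `p`
satisfies via `p →α p'` and `q` does not. -/

section Distinguishing

variable (step : Option A → X → X → Prop)

def PHMLUDistinguishes (a b : X) : Prop :=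
  ∃ φ : PHMLU A, Sat step φ.toHMLU a ∧ ¬ Sat step φ.toHMLU b

variable {step}

@[simp]
lemma not_sat_toHMLU_bot (x : X) : ¬ Sat step (PHMLU.bot : PHMLU A).toHMLU x :=
  fun h => h trivial

@[simp]
lemma sat_toHMLU_or (φ ψ : PHMLU A) (x : X) :
    Sat step (φ.or ψ).toHMLU x ↔ Sat step φ.toHMLU x ∨ Sat step ψ.toHMLU x := by
  simp only [PHMLU.toHMLU, Sat]
  tauto

lemma PHMLUDistinguishes.exists_sat_forall_not_sat {ι : Type*} {s : Set ι} (hs : s.Finite)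
    {a : X} {b : ι → X} (h : ∀ i ∈ s, PHMLUDistinguishes step a (b i)) :
    ∃ φ : PHMLU A, Sat step φ.toHMLU a ∧ ∀ i ∈ s, ¬ Sat step φ.toHMLU (b i) := by
  induction s, hs using Set.Finite.induction_on with
  | empty => exact ⟨.top, trivial, by simp⟩
  | @insert i s _ _ ih =>
    obtain ⟨φ, hφa, hφb⟩ := h i (s.mem_insert i)
    obtain ⟨ψ, hψa, hψb⟩ := ih fun j hj => h j (s.mem_insert_of_mem i hj)
    refine ⟨φ.and ψ, ⟨hφa, hψa⟩, ?_⟩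
    rintro j (rfl | hj) ⟨hφj, hψj⟩
    exacts [hφb hφj, hψb j hj hψj]

lemma PHMLUDistinguishes.exists_forall_sat_not_sat {ι : Type*} {s : Set ι} (hs : s.Finite)
    {a : ι → X} {b : X} (h : ∀ i ∈ s, PHMLUDistinguishes step (a i) b) :
    ∃ φ : PHMLU A, (∀ i ∈ s, Sat step φ.toHMLU (a i)) ∧ ¬ Sat step φ.toHMLU b := by
  induction s, hs using Set.Finite.induction_on with
  | empty => exact ⟨.bot, by simp, not_sat_toHMLU_bot b⟩
  | @insert i s _ _ ih =>
    obtain ⟨φ, hφa, hφb⟩ := h i (s.mem_insert i)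
    obtain ⟨ψ, hψa, hψb⟩ := ih fun j hj => h j (s.mem_insert_of_mem i hj)
    refine ⟨φ.or ψ, ?_, by simp [hφb, hψb]⟩
    rintro j (rfl | hj)
    exacts [(sat_toHMLU_or φ ψ _).2 (.inl hφa), (sat_toHMLU_or φ ψ _).2 (.inr (hψa j hj))]

end Distinguishing

lemma Relation.ReflTransGen.of_and_target {R : X → X → Prop} {P : X → Prop} {a b : X}
    (h : Relation.ReflTransGen (fun x y => R x y ∧ P y) a b) (ha : P a) :
    Relation.ReflTransGen R a b ∧ P b := by
  induction h with
  | refl => exact ⟨.refl, ha⟩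
  | tail _ hbc ih => exact ⟨ih.1.tail hbc.1, hbc.2⟩

theorem isDBApartRel_phmluDistinguishes (step : Option A → X → X → Prop)
    (hfin : ∀ (α : Option A) (q : X),
      {x : X × X | Relation.ReflTransGen (step none) q x.1 ∧ step α x.1 x.2}.Finite) :
    IsDBApartRel step (PHMLUDistinguishes step) := by
  intro α p p' q hpp' hsplit
  set S := {x : X × X | Relation.ReflTransGen (step none) q x.1 ∧ step α x.1 x.2}
  have hsep (P : X × X → Prop) : {x ∈ S | P x}.Finite := (hfin α q).subset (Set.sep_subset S P)
  obtain ⟨δ, hδp, hδS⟩ := PHMLUDistinguishes.exists_sat_forall_not_sat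
    (hsep fun x => PHMLUDistinguishes step p x.1) (b := Prod.fst) fun _ hx => hx.2
  obtain ⟨ψp, hψpp, hψpS⟩ := PHMLUDistinguishes.exists_sat_forall_not_sat
    (hsep fun x => PHMLUDistinguishes step p' x.2) (b := Prod.snd) fun _ hx => hx.2
  obtain ⟨ψn, hψnS, hψnp⟩ := PHMLUDistinguishes.exists_forall_sat_not_sat
    (hsep fun x => PHMLUDistinguishes step x.2 p') (a := Prod.snd) fun _ hx => hx.2
  refine ⟨.dia δ α ψp ψn, ⟨p, p', hδp, .refl, hpp', hψpp, hψnp⟩, ?_⟩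
  rintro ⟨q', q'', hδq, hpath, hq'q'', hψpq'', hψnq''⟩
  obtain ⟨hqq', hδq'⟩ := hpath.of_and_target hδq
  have hS : (q', q'') ∈ S := ⟨hqq', hq'q''⟩
  rcases hsplit q' q'' hqq' hq'q'' with h | h | h
  · exact hδS _ ⟨hS, h⟩ hδq'
  · exact hψpS _ ⟨hS, h⟩ hψpq''
  · exact hψnq'' (hψnS _ ⟨hS, h⟩)

theorem dbApart_gives_distinguishing_phmlu (step : Option A → X → X → Prop)
    (htau : ∀ p : X, step none p p)
    (hfin : ∀ (α : Option A) (q : X),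
      {x : X × X | Relation.ReflTransGen (step none) q x.1 ∧ step α x.1 x.2}.Finite)
    (hfin' : ∀ (α : Option A) (q : X), {q' : X | step α q q'}.Finite)
    (p q : X) (h : DBApart step p q) :
    ∃ φ : PHMLU A, Sat step φ.toHMLU p ∧ ¬ Sat step φ.toHMLU q :=
  h _ (isDBApartRel_phmluDistinguishes step hfin)
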